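/- Let t: G∘G ⟹ G∘G satisfy the QYBE and t² = id, and define t⁽ⁿ⁾ inductively as before. Then (t⁽ⁿ⁺¹⁾)² = G(t⁽ⁿ⁾) ∘ (t⁽ⁿ⁾)_G for all n ≥ 1. -/

import Mathlib

open CategoryTheory

variable {A : Type*} [Category A]

/-- `gpow G n M` is the `n`-th power `Gⁿ M` of the endofunctor `G` applied to `M`. -/
def gpow (Gf : A ⥤ A) : ℕ → A → A
  | 0, M => M
  | n+1, M => gpow Gf n (Gf.obj M)

/-- `gmap G n f = Gⁿ(f)`. -/
def gmap (Gf : A ⥤ A) : (n : ℕ) → {X Y : A} → (X ⟶ Y) → (gpow Gf n X ⟶ gpow Gf n Y)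
  | 0, _, _, f => f
  | n+1, _, _, f => gmap Gf n (Gf.map f)

lemma gpow_succ_out (Gf : A ⥤ A) : ∀ (n : ℕ) (M : A), gpow Gf (n+1) M = Gf.obj (gpow Gf n M)
  | 0, _ => rfl
  | n+1, M => gpow_succ_out Gf n (Gf.obj M)

lemma gpow_add (Gf : A ⥤ A) : ∀ (a b : ℕ) (M : A), gpow Gf a (gpow Gf b M) = gpow Gf (a + b) M
  | a, 0, M => rfl
  | a, b+1, M => by
      rw [Nat.add_succ]
      exact gpow_add Gf a b (Gf.obj M)

lemma gpow_add' (Gf : A ⥤ A) (a b c : ℕ) (h : a + b = c) (M : A) :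
    gpow Gf a (gpow Gf b M) = gpow Gf c M := by subst h; exact gpow_add Gf a b M

/-- `tpow G t n` is the component family of `t⁽ⁿ⁺¹⁾`, where `t⁽¹⁾ = t` and
`t⁽ⁿ⁺¹⁾ = (t⁽ⁿ⁾)_G ∘ Gⁿ(t)`. -/
def tpow (Gf : A ⥤ A) (t : Gf ⋙ Gf ⟶ Gf ⋙ Gf) :
    (n : ℕ) → (M : A) → (gpow Gf (n+2) M ⟶ gpow Gf (n+2) M)
  | 0, M => t.app M
  | n+1, M => gmap Gf (n+1) (t.app M) ≫ tpow Gf t n (Gf.obj M)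

/-!
The square of `t⁽ⁿ⁺²⁾ = Gⁿ⁺¹(t) ≫ t⁽ⁿ⁺¹⁾_G` is rearranged by naturality of `t⁽ⁿ⁺¹⁾` and the
braid relation `Gⁿ⁺¹(t) ≫ Gⁿ(t_G) ≫ Gⁿ⁺¹(t) = Gⁿ(t_G) ≫ Gⁿ⁺¹(t) ≫ Gⁿ(t_G)` (the QYBE under `Gⁿ`)
until the square of `t⁽ⁿ⁺¹⁾_G` appears, to which induction applies. In the base case the QYBE
and `t ≫ t = 𝟙` alone give `(G(t) ≫ t_G)² = t_G ≫ G(t)`.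
-/

section

variable (Gf : A ⥤ A)

lemma gmap_comp : ∀ (n : ℕ) {X Y Z : A} (f : X ⟶ Y) (g : Y ⟶ Z),
    gmap Gf n (f ≫ g) = gmap Gf n f ≫ gmap Gf n g
  | 0, _, _, _, _, _ => rfl
  | n + 1, _, _, _, f, g => (congrArg (gmap Gf n) (Gf.map_comp f g)).trans (gmap_comp n _ _)

/-- `gpow` adds the new factor `G` on the inside; this applies `G` on the outside,
transported along `Gᵏ⁺¹ X = G (Gᵏ X)`. -/
def outerMap (k : ℕ) {X Y : A} (f : gpow Gf k X ⟶ gpow Gf k Y) :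
    gpow Gf (k + 1) X ⟶ gpow Gf (k + 1) Y :=
  eqToHom (gpow_succ_out Gf k X) ≫ Gf.map f ≫ eqToHom (gpow_succ_out Gf k Y).symm

lemma outerMap_comp (k : ℕ) {X Y Z : A} (f : gpow Gf k X ⟶ gpow Gf k Y)
    (g : gpow Gf k Y ⟶ gpow Gf k Z) :
    outerMap Gf k (f ≫ g) = outerMap Gf k f ≫ outerMap Gf k g := by
  simp [outerMap]

lemma gmap_succ_eq_outerMap : ∀ (k : ℕ) {X Y : A} (f : X ⟶ Y),
    gmap Gf (k + 1) f = outerMap Gf k (gmap Gf k f)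
  | 0, _, _, f => by
    change Gf.map f = eqToHom rfl ≫ Gf.map f ≫ eqToHom rfl
    simp
  | k + 1, _, _, f => gmap_succ_eq_outerMap k (Gf.map f)

variable (t : Gf ⋙ Gf ⟶ Gf ⋙ Gf)

lemma tpow_naturality : ∀ (n : ℕ) {X Y : A} (g : X ⟶ Y),
    gmap Gf (n + 2) g ≫ tpow Gf t n Y = tpow Gf t n X ≫ gmap Gf (n + 2) g
  | 0, _, _, g => t.naturality g
  | n + 1, X, Y, g => by
    -- Naming the factors with uniform types lets `rw` match them: the types `gpow` computes
    -- for them are only definitionally equal.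
    set gg : gpow Gf (n + 3) X ⟶ gpow Gf (n + 3) Y := gmap Gf (n + 3) g
    set tX : gpow Gf (n + 3) X ⟶ gpow Gf (n + 3) X := gmap Gf (n + 1) (t.app X)
    set tY : gpow Gf (n + 3) Y ⟶ gpow Gf (n + 3) Y := gmap Gf (n + 1) (t.app Y)
    have hgt : gg ≫ tY = tX ≫ gg := by
      have nat := congrArg (gmap Gf (n + 1)) (t.naturality g)
      simp only [gmap_comp] at nat
      exact nat
    set TX : gpow Gf (n + 3) X ⟶ gpow Gf (n + 3) X := tpow Gf t n (Gf.obj X)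
    set TY : gpow Gf (n + 3) Y ⟶ gpow Gf (n + 3) Y := tpow Gf t n (Gf.obj Y)
    have hgT : gg ≫ TY = TX ≫ gg := tpow_naturality n (Gf.map g)
    change gg ≫ tY ≫ TY = (tX ≫ TX) ≫ gg
    rw [reassoc_of% hgt, hgT, Category.assoc]

lemma gmap_qybe
    (hqybe : ∀ M : A, Gf.map (t.app M) ≫ t.app (Gf.obj M) ≫ Gf.map (t.app M) =
      t.app (Gf.obj M) ≫ Gf.map (t.app M) ≫ t.app (Gf.obj M))
    (n : ℕ) (M : A) :
    gmap Gf (n + 2) (t.app M) ≫ gmap Gf (n + 1) (t.app (Gf.obj M)) ≫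
        gmap Gf (n + 2) (t.app M) =
      gmap Gf (n + 1) (t.app (Gf.obj M)) ≫ gmap Gf (n + 2) (t.app M) ≫
        gmap Gf (n + 1) (t.app (Gf.obj M)) := by
  have braid := congrArg (gmap Gf (n + 1)) (hqybe M)
  simp only [gmap_comp] at braid
  exact braid

end

/-- if `t` satisfies the QYBE and `t² = id`, then
`(t⁽ⁿ⁺¹⁾)² = G(t⁽ⁿ⁾) ∘ (t⁽ⁿ⁾)_G` for all `n ≥ 1`
(stated with `tpow Gf t k = t⁽ᵏ⁺¹⁾`). -/
theorem tpow_sq (Gf : A ⥤ A) (t : Gf ⋙ Gf ⟶ Gf ⋙ Gf)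
    (hqybe : ∀ M : A, Gf.map (t.app M) ≫ t.app (Gf.obj M) ≫ Gf.map (t.app M) =
      t.app (Gf.obj M) ≫ Gf.map (t.app M) ≫ t.app (Gf.obj M))
    (hsq : ∀ M : A, t.app M ≫ t.app M = 𝟙 ((Gf ⋙ Gf).obj M))
    (n : ℕ) (M : A) :
    tpow Gf t (n + 1) M ≫ tpow Gf t (n + 1) M =
      tpow Gf t n (Gf.obj M) ≫
        eqToHom (show gpow Gf (n+3) M = Gf.obj (gpow Gf (n+2) M) from
          gpow_succ_out Gf (n+2) M) ≫
        Gf.map (tpow Gf t n M) ≫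
        eqToHom (show Gf.obj (gpow Gf (n+2) M) = gpow Gf (n+3) M from
          (gpow_succ_out Gf (n+2) M).symm) := by
  change _ = tpow Gf t n (Gf.obj M) ≫ outerMap Gf (n + 2) (tpow Gf t n M)
  induction n generalizing M with
  | zero =>
    change (Gf.map (t.app M) ≫ t.app (Gf.obj M)) ≫ Gf.map (t.app M) ≫ t.app (Gf.obj M) =
      t.app (Gf.obj M) ≫ eqToHom rfl ≫ Gf.map (t.app M) ≫ eqToHom rfl
    simp [reassoc_of% hqybe M, hsq (Gf.obj M)]
  | succ n ih =>
    set P := gpow Gf (n + 4) M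
    set a : P ⟶ P := gmap Gf (n + 2) (t.app M)
    set b : P ⟶ P := gmap Gf (n + 1) (t.app (Gf.obj M))
    set T : P ⟶ P := tpow Gf t n (Gf.obj (Gf.obj M))
    set S : P ⟶ P := outerMap Gf (n + 2) (tpow Gf t n (Gf.obj M))
    have hT : a ≫ T = T ≫ a := tpow_naturality Gf t n (t.app M)
    have hab : a ≫ b ≫ a = b ≫ a ≫ b := gmap_qybe Gf t hqybe n M
    have ihG : (b ≫ T) ≫ b ≫ T = T ≫ S := ih (Gf.obj M)
    have hS : outerMap Gf (n + 3) (tpow Gf t (n + 1) M) = a ≫ S :=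
      (outerMap_comp Gf (n + 3) (X := M) (Y := M) (Z := M) _ _).trans
        (congrArg (· ≫ S) (gmap_succ_eq_outerMap Gf (n + 1) (t.app M)).symm)
    change (a ≫ b ≫ T) ≫ a ≫ b ≫ T = (b ≫ T) ≫ outerMap Gf (n + 3) (tpow Gf t (n + 1) M)
    calc (a ≫ b ≫ T) ≫ a ≫ b ≫ T = a ≫ b ≫ a ≫ T ≫ b ≫ T := by simp [reassoc_of% hT]
      _ = b ≫ a ≫ (b ≫ T) ≫ b ≫ T := by simp [reassoc_of% hab]
      _ = b ≫ (a ≫ T) ≫ S := by rw [ihG]; simp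
      _ = (b ≫ T) ≫ outerMap Gf (n + 3) (tpow Gf t (n + 1) M) := by rw [hT, hS]; simp
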